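/- arXiv:1501.00152 — 3 statements merged into one kernel-verified Lean document; each statement's English description precedes it below -/
import Mathlib

section
/- Let $\Omega \subseteq \mathbb{R}^N$ be a bounded smooth domain, $1 < p < \infty$, $\hat u_1 \in W^{1,p}(\Omega) \cap C^1(\overline\Omega)$ with $\hat u_1 > 0$ on $\overline\Omega$ and $\|\hat u_1\|_p = 1$. Let $U = \{u \in W^{1,p}(\Omega) : \|u\|_p = 1\}$, $\Gamma_1 = \{\gamma \in C^0([-1,1], U) : \gamma(-1) = -\hat u_1, \gamma(1) = \hat u_1\}$, and $\Gamma_C = \{\gamma \in \Gamma_1 : \gamma(t) \in C^1(\overline\Omega) \text{ for all } t\}$ (with continuity into $C^1(\overline\Omega)$ for the interior values). Then $\Gamma_C$ is dense in $\Gamma_1$ with respect to the norm of $C^0([-1,1], W^{1,p}(\Omega))$: for every $\gamma \in \Gamma_1$ there is a sequence $\{\gamma_n\} \subseteq \Gamma_C$ with $\max_{t \in [-1,1]} \|\gamma_n(t) - \gamma(t)\| \to 0$. -/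
open Filter Topology Set


open Finset in
lemma hat_sum_one (k : ℕ) (hk : 1 ≤ k) (s : ℝ) (hs0 : 0 ≤ s) (hsk : s ≤ k) :
    ∑ i ∈ Finset.range (k+1), max 0 (1 - |s - (i:ℝ)|) = 1 := by
  set m : ℕ := min ⌊s⌋₊ (k-1) with hm
  have hmk : m + 1 ≤ k := by
    have : m ≤ k - 1 := min_le_right _ _
    omega
  have hm1 : (m:ℝ) ≤ s := by
    calc (m:ℝ) ≤ (⌊s⌋₊:ℝ) := by exact_mod_cast min_le_left _ _
    _ ≤ s := Nat.floor_le hs0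
  have hm2 : s ≤ (m:ℝ) + 1 := by
    rcases le_or_gt (⌊s⌋₊) (k-1) with h | h
    · have : m = ⌊s⌋₊ := by omega
      rw [this]
      exact (Nat.lt_floor_add_one s).le
    · have hmek : m = k - 1 := by omega
      have : (m:ℝ) + 1 = (k:ℝ) := by
        rw [hmek]; push_cast [Nat.cast_sub hk]; ring
      rw [this]; exact hsk
  have hsub : ({m, m+1} : Finset ℕ) ⊆ Finset.range (k+1) := by
    intro i hi
    simp only [Finset.mem_insert, Finset.mem_singleton] at hi
    rcases hi with rfl | rfl <;> simp [Finset.mem_range] <;> omega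
  have hzero : ∀ i ∈ Finset.range (k+1), i ∉ ({m, m+1} : Finset ℕ) →
      max 0 (1 - |s - (i:ℝ)|) = 0 := by
    intro i _ hi
    simp only [Finset.mem_insert, Finset.mem_singleton, not_or] at hi
    have : (1:ℝ) ≤ |s - i| := by
      rcases lt_or_gt_of_ne hi.1 with h | h
      · have : (i:ℝ) + 1 ≤ m := by exact_mod_cast h
        rw [abs_of_nonneg (by linarith)]; linarith
      · have hi2 : m + 2 ≤ i := by omega
        have : (m:ℝ) + 2 ≤ i := by exact_mod_cast hi2
        rw [abs_of_nonpos (by linarith)]; linarith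
    simp [max_eq_left]; linarith
  rw [← Finset.sum_subset hsub hzero, Finset.sum_pair (by omega : m ≠ m + 1)]
  have h1 : |s - (m:ℝ)| = s - m := abs_of_nonneg (by linarith)
  have h2 : |s - ((m+1:ℕ):ℝ)| = (m:ℝ) + 1 - s := by
    push_cast; rw [abs_of_nonpos (by linarith)]; ring
  rw [h1, h2, max_eq_right (by push_cast; linarith), max_eq_right (by push_cast; linarith)]
  push_cast; ring


lemma approx_lemma
    {X : Type*} [NormedAddCommGroup X] [NormedSpace ℝ X]
    {Y : Type*} [NormedAddCommGroup Y] [NormedSpace ℝ Y]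
    (j : Y →L[ℝ] X) (hdense : DenseRange j)
    (y₁ : Y) (u1hat : X) (hy₁ : j y₁ = u1hat)
    (γ : ℝ → X) (hγcont : ContinuousOn γ (Icc (-1) 1))
    (hγends : γ (-1) = -u1hat ∧ γ 1 = u1hat)
    (ε : ℝ) (hε : 0 < ε) :
    ∃ σ : ℝ → Y, Continuous σ ∧ σ (-1) = -y₁ ∧ σ 1 = y₁ ∧
      ∀ t ∈ Icc (-1:ℝ) 1, ‖j (σ t) - γ t‖ < ε := by
  have hcomp : IsCompact (Icc (-1:ℝ) 1) := isCompact_Icc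
  have huc : UniformContinuousOn γ (Icc (-1) 1) :=
    hcomp.uniformContinuousOn_of_continuous hγcont
  rw [Metric.uniformContinuousOn_iff] at huc
  obtain ⟨d, hd, hducont⟩ := huc (ε/3) (by linarith)
  obtain ⟨k, hk⟩ := exists_nat_gt (max 1 (2/d))
  have hk1 : 1 ≤ k := by
    have h1 := (le_max_left 1 (2/d)).trans_lt hk
    exact_mod_cast Nat.one_le_cast.mp (by exact_mod_cast h1.le)
  have hkpos : (0:ℝ) < k := by positivity
  have hk2 : (k:ℝ) * (2/k) = 2 := by field_simp
  set h : ℝ := 2 / k with hh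
  have hhpos : 0 < h := by positivity
  have hhd : h < d := by
    rw [hh, div_lt_iff₀ hkpos]
    have h2d : 2/d < k := (le_max_right 1 (2/d)).trans_lt hk
    have := (div_lt_iff₀ hd).mp h2d
    linarith
  set T : ℕ → ℝ := fun i => -1 + i * h with hT
  have hTk : T k = 1 := by simp only [hT, ← hh] at hk2 ⊢; linarith
  have hT0 : T 0 = -1 := by simp [hT]
  have hTmem : ∀ i ≤ k, T i ∈ Icc (-1:ℝ) 1 := by
    intro i hi
    have hik : (i:ℝ) ≤ k := by exact_mod_cast hi
    constructor
    · simp only [hT]; nlinarith [Nat.cast_nonneg (α := ℝ) i]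
    · simp only [hT, hh]; nlinarith
  have Hc : ∀ x : X, ∃ y : Y, ‖j y - x‖ < ε/3 := by
    intro x
    obtain ⟨y, hy⟩ := Metric.denseRange_iff.mp hdense x (ε/3) (by linarith)
    exact ⟨y, by rwa [← dist_eq_norm, dist_comm]⟩
  choose ch hch using Hc
  set g : ℕ → Y := fun i => if i = 0 then -y₁ else if i = k then y₁ else ch (γ (T i)) with hg
  have hgapprox : ∀ i ≤ k, ‖j (g i) - γ (T i)‖ < ε/3 := by
    intro i hi
    by_cases h0 : i = 0
    · subst h0
      have : g 0 = -y₁ := by simp [hg]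
      rw [this, hT0, map_neg, hy₁, hγends.1, sub_self, norm_zero]
      linarith
    · by_cases hik : i = k
      · have hk0 : k ≠ 0 := by omega
        have hgi : g i = y₁ := by simp [hg, h0, hik, hk0]
        rw [hgi, hik, hTk, hy₁, hγends.2, sub_self, norm_zero]
        linarith
      · have : g i = ch (γ (T i)) := by simp [hg, h0, hik]
        rw [this]; exact hch _
  set φ : ℕ → ℝ → ℝ := fun i t => max 0 (1 - |(t+1)/h - i|) with hφ
  have hφcont : ∀ i, Continuous (φ i) := fun i => continuous_const.max (by fun_prop)
  have hφnonneg : ∀ i t, 0 ≤ φ i t := fun i t => le_max_left _ _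
  have hφsum : ∀ t ∈ Icc (-1:ℝ) 1, ∑ i ∈ Finset.range (k+1), φ i t = 1 := by
    intro t ht
    apply hat_sum_one k hk1
    · exact div_nonneg (by linarith [ht.1]) hhpos.le
    · rw [div_le_iff₀ hhpos, hh]; linarith [ht.2]
  have hrewr : ∀ i (t : ℝ), (t+1)/h - i = (t - T i)/h := by
    intro i t; simp only [hT]; field_simp; ring
  have hφsupp : ∀ i t, φ i t ≠ 0 → |t - T i| < h := by
    intro i t hne
    have hgt : 0 < 1 - |(t+1)/h - i| := by
      rcases lt_or_ge 0 (1 - |(t+1)/h - i|) with h' | h'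
      · exact h'
      · exact absurd (max_eq_left h') hne
    have habs : |(t+1)/h - i| < 1 := by linarith
    rw [hrewr, abs_div, abs_of_pos hhpos, div_lt_one hhpos] at habs
    exact habs
  have hφval1 : ∀ i₀, φ i₀ (T i₀) = 1 := by
    intro i₀
    simp only [hφ, hrewr, sub_self, zero_div, abs_zero, sub_zero]
    norm_num
  have hφval0 : ∀ i i₀, i ≠ i₀ → φ i (T i₀) = 0 := by
    intro i i₀ hii
    by_contra hne
    have hb := hφsupp i (T i₀) hne
    have hTd : |T i₀ - T i| = |(i₀:ℝ) - i| * h := by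
      simp only [hT]
      rw [show -1 + (i₀:ℝ)*h - (-1 + i*h) = ((i₀:ℝ) - i) * h by ring, abs_mul,
        abs_of_pos hhpos]
    rw [hTd] at hb
    have h1 : (1:ℝ) ≤ |(i₀:ℝ) - i| := by
      have hne2 : (i₀:ℝ) - i ≠ 0 := by
        intro hcon
        have : (i:ℝ) = i₀ := by linarith
        exact hii (by exact_mod_cast this)
      rcases lt_or_gt_of_ne hne2 with hlt | hgt
      · have : i₀ + 1 ≤ i := by
          have : i₀ < i := by exact_mod_cast (by linarith : (i₀:ℝ) < i)
          omega
        have : (i₀:ℝ) + 1 ≤ i := by exact_mod_cast this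
        rw [abs_of_neg (by linarith)]; linarith
      · have : i + 1 ≤ i₀ := by
          have : i < i₀ := by exact_mod_cast (by linarith : (i:ℝ) < i₀)
          omega
        have : (i:ℝ) + 1 ≤ i₀ := by exact_mod_cast this
        rw [abs_of_pos (by linarith)]; linarith
    nlinarith
  set σ : ℝ → Y := fun t => ∑ i ∈ Finset.range (k+1), φ i t • g i with hσ
  have hσcont : Continuous σ := by
    apply continuous_finset_sum
    intro i _
    exact (hφcont i).smul continuous_const
  have hend : ∀ i₀ ≤ k, σ (T i₀) = g i₀ := by
    intro i₀ hi₀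
    rw [hσ]
    simp only
    rw [Finset.sum_eq_single i₀
      (fun i _ hii => by rw [hφval0 i i₀ hii, zero_smul])
      (fun hcon => absurd (Finset.mem_range.mpr (by omega)) hcon)]
    rw [hφval1, one_smul]
  refine ⟨σ, hσcont, ?_, ?_, ?_⟩
  · have := hend 0 (by omega)
    rw [hT0] at this
    rw [this]; simp [hg]
  · have := hend k (by omega)
    rw [hTk] at this
    rw [this]
    have : k ≠ 0 := by omega
    simp [hg, this]
  · intro t ht
    have key : j (σ t) - γ t = ∑ i ∈ Finset.range (k+1), φ i t • (j (g i) - γ t) := by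
      have h1 : j (σ t) = ∑ i ∈ Finset.range (k+1), φ i t • j (g i) := by
        rw [hσ]; simp only
        rw [map_sum]
        congr 1; ext i; rw [map_smul]
      have h2 : γ t = ∑ i ∈ Finset.range (k+1), φ i t • γ t := by
        rw [← Finset.sum_smul, hφsum t ht, one_smul]
      rw [h1]
      conv_lhs => rw [h2]
      rw [← Finset.sum_sub_distrib]
      congr 1; ext i; rw [smul_sub]
    rw [key]
    calc ‖∑ i ∈ Finset.range (k+1), φ i t • (j (g i) - γ t)‖
        ≤ ∑ i ∈ Finset.range (k+1), ‖φ i t • (j (g i) - γ t)‖ := norm_sum_le _ _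
      _ ≤ ∑ i ∈ Finset.range (k+1), φ i t * (2*ε/3) := by
          apply Finset.sum_le_sum
          intro i hi
          rw [norm_smul, Real.norm_eq_abs, abs_of_nonneg (hφnonneg i t)]
          by_cases hz : φ i t = 0
          · rw [hz]; simp
          · apply mul_le_mul_of_nonneg_left _ (hφnonneg i t)
            have hik : i ≤ k := by
              have := Finset.mem_range.mp hi; omega
            have hclose := hφsupp i t hz
            have hγclose : ‖γ (T i) - γ t‖ < ε/3 := by
              have := hducont (T i) (hTmem i hik) t ht (by
                rw [Real.dist_eq, abs_sub_comm]; linarith)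
              rwa [dist_eq_norm] at this
            have htri : ‖j (g i) - γ t‖ ≤ ‖j (g i) - γ (T i)‖ + ‖γ (T i) - γ t‖ := by
              have h3 := norm_add_le (j (g i) - γ (T i)) (γ (T i) - γ t)
              simpa using h3
            linarith [hgapprox i hik]
      _ = (∑ i ∈ Finset.range (k+1), φ i t) * (2*ε/3) := by rw [Finset.sum_mul]
      _ = 2*ε/3 := by rw [hφsum t ht, one_mul]
      _ < ε := by linarith


/-- density of `Γ_C` in `Γ₁`.  Here `X` models `W^{1,p}(Ω)`,
`Y` models `C¹(Ω̄)` with its own (finer) norm, `j : Y → X` is the continuous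
dense embedding, and `np` is the `L^p(Ω)`-norm on `X` (a continuous seminorm).
`u1hat` is the positive first eigenfunction, which belongs to `C¹(Ω̄)` and is
`L^p`-normalized.  For every `γ ∈ Γ₁` (a continuous path in
`U = {u : ‖u‖_p = 1}` joining `-u1hat` to `u1hat`) there is a sequence of paths
`γₙ ∈ Γ_C` (continuous with values in `C¹(Ω̄)`, still `L^p`-normalized, same
endpoints) with `max_{t∈[-1,1]} ‖γₙ(t) - γ(t)‖ → 0`. -/
theorem GammaC_dense_in_Gamma1
    {X : Type*} [NormedAddCommGroup X] [NormedSpace ℝ X]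
    {Y : Type*} [NormedAddCommGroup Y] [NormedSpace ℝ Y]
    (j : Y →L[ℝ] X) (hdense : DenseRange j)
    -- the L^p-seminorm on X :
    (np : X → ℝ) (c : ℝ) (hc : 0 < c)
    (hnp_nonneg : ∀ u, 0 ≤ np u)
    (hnp_le : ∀ u, np u ≤ c * ‖u‖)
    (hnp_add : ∀ u v, np (u + v) ≤ np u + np v)
    (hnp_smul : ∀ (a : ℝ) (u), np (a • u) = |a| * np u)
    -- the first eigenfunction u1hat ∈ C¹(Ω̄), L^p-normalized :
    (y₁ : Y) (u1hat : X) (hy₁ : j y₁ = u1hat) (hu1hat : np u1hat = 1)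
    -- γ ∈ Γ₁ :
    (γ : ℝ → X) (hγcont : ContinuousOn γ (Icc (-1) 1))
    (hγU : ∀ t ∈ Icc (-1:ℝ) 1, np (γ t) = 1)
    (hγends : γ (-1) = -u1hat ∧ γ 1 = u1hat) :
    ∃ δ : ℕ → ℝ → Y,
      (∀ n, ContinuousOn (δ n) (Icc (-1) 1)) ∧
      (∀ n, ∀ t ∈ Icc (-1:ℝ) 1, np (j (δ n t)) = 1) ∧
      (∀ n, j (δ n (-1)) = -u1hat ∧ j (δ n 1) = u1hat) ∧
      (∀ ε > (0:ℝ), ∃ N, ∀ n ≥ N, ∀ t ∈ Icc (-1:ℝ) 1, ‖j (δ n t) - γ t‖ < ε) := by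
  -- basic facts about np
  have hnp_neg : ∀ u : X, np (-u) = np u := by
    intro u
    have := hnp_smul (-1) u
    simpa using this
  have hlip : ∀ u v : X, |np u - np v| ≤ c * ‖u - v‖ := by
    intro u v
    have h1 : np u ≤ np (u - v) + np v := by
      have := hnp_add (u - v) v
      simpa using this
    have h2 : np v ≤ np (u - v) + np u := by
      have := hnp_add (v - u) u
      have hrw : np (v - u) = np (u - v) := by
        rw [show v - u = -(u - v) by abel, hnp_neg]
      simp only [sub_add_cancel] at this
      rw [hrw] at this
      exact this
    have h3 := hnp_le (u - v)
    rw [abs_le]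
    constructor <;> linarith
  have hnpc : Continuous np := by
    rw [Metric.continuous_iff]
    intro u ε hε
    refine ⟨ε / c, by positivity, fun v hv => ?_⟩
    have := hlip v u
    rw [Real.dist_eq, dist_eq_norm] at *
    calc |np v - np u| ≤ c * ‖v - u‖ := this
      _ < c * (ε / c) := by apply mul_lt_mul_of_pos_left hv hc
      _ = ε := by field_simp
  -- bound on γ
  obtain ⟨M, hM⟩ := isCompact_Icc.exists_bound_of_continuousOn hγcont
  set M' : ℝ := max M 0 with hM'
  have hM'0 : 0 ≤ M' := le_max_right _ _
  have hMbd : ∀ t ∈ Icc (-1:ℝ) 1, ‖γ t‖ ≤ M' := fun t ht => (hM t ht).trans (le_max_left _ _)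
  -- key approximation step
  have key : ∀ ε > (0:ℝ), ∃ δ : ℝ → Y,
      ContinuousOn δ (Icc (-1) 1) ∧
      (∀ t ∈ Icc (-1:ℝ) 1, np (j (δ t)) = 1) ∧
      (j (δ (-1)) = -u1hat ∧ j (δ 1) = u1hat) ∧
      (∀ t ∈ Icc (-1:ℝ) 1, ‖j (δ t) - γ t‖ < ε) := by
    intro ε hε
    set K : ℝ := 1 + 2*c*(M'+1) with hK
    have hK0 : 0 < K := by positivity
    set ε₀ : ℝ := min 1 (min (1/(2*c)) (ε/(2*K))) with hε₀
    have hε₀0 : 0 < ε₀ := by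
      apply lt_min one_pos (lt_min (by positivity) (by positivity))
    have hε₀1 : ε₀ ≤ 1 := min_le_left _ _
    have hε₀c : ε₀ ≤ 1/(2*c) := (min_le_right _ _).trans (min_le_left _ _)
    have hε₀ε : ε₀ ≤ ε/(2*K) := (min_le_right _ _).trans (min_le_right _ _)
    obtain ⟨σ, hσcont, hσm1, hσ1, hσapprox⟩ :=
      approx_lemma j hdense y₁ u1hat hy₁ γ hγcont hγends ε₀ hε₀0
    set a : ℝ → ℝ := fun t => np (j (σ t)) with ha
    have hadist : ∀ t ∈ Icc (-1:ℝ) 1, |a t - 1| ≤ c * ε₀ := by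
      intro t ht
      have h1 := hlip (j (σ t)) (γ t)
      rw [hγU t ht] at h1
      calc |a t - 1| ≤ c * ‖j (σ t) - γ t‖ := h1
        _ ≤ c * ε₀ := by
            apply mul_le_mul_of_nonneg_left (hσapprox t ht).le hc.le
    have hcε₀ : c * ε₀ ≤ 1/2 := by
      calc c * ε₀ ≤ c * (1/(2*c)) := mul_le_mul_of_nonneg_left hε₀c hc.le
        _ = 1/2 := by field_simp
    have hahalf : ∀ t ∈ Icc (-1:ℝ) 1, 1/2 ≤ a t := by
      intro t ht
      have := hadist t ht
      rw [abs_le] at this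
      linarith [this.1]
    have hapos : ∀ t ∈ Icc (-1:ℝ) 1, 0 < a t := fun t ht => lt_of_lt_of_le one_half_pos (hahalf t ht)
    refine ⟨fun t => (a t)⁻¹ • σ t, ?_, ?_, ?_, ?_⟩
    · apply ContinuousOn.smul
      · exact ((hnpc.comp (j.continuous.comp hσcont)).continuousOn).inv₀
          (fun t ht => (hapos t ht).ne')
      · exact hσcont.continuousOn
    · intro t ht
      rw [map_smul, hnp_smul]
      rw [abs_of_pos (inv_pos.mpr (hapos t ht))]
      exact inv_mul_cancel₀ (hapos t ht).ne'
    · constructor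
      · have haend : a (-1) = 1 := by
          rw [ha]
          simp only
          rw [hσm1, map_neg, hy₁, hnp_neg, hu1hat]
        simp only [haend, inv_one, one_smul, hσm1, map_neg, hy₁]
      · have haend : a 1 = 1 := by
          rw [ha]
          simp only
          rw [hσ1, hy₁, hu1hat]
        simp only [haend, inv_one, one_smul, hσ1, hy₁]
    · intro t ht
      have hainv2 : (a t)⁻¹ ≤ 2 := by
        rw [show (2:ℝ) = (1/2)⁻¹ by norm_num]
        exact inv_anti₀ one_half_pos (hahalf t ht)
      have hσbd : ‖j (σ t)‖ ≤ M' + 1 := by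
        calc ‖j (σ t)‖ ≤ ‖γ t‖ + ‖j (σ t) - γ t‖ := by
              have := norm_add_le (γ t) (j (σ t) - γ t)
              simpa using this
          _ ≤ M' + 1 := by
              have := hσapprox t ht
              have := hMbd t ht
              linarith
      have hsplit : j ((a t)⁻¹ • σ t) - γ t
          = ((a t)⁻¹ - 1) • j (σ t) + (j (σ t) - γ t) := by
        rw [map_smul, sub_smul, one_smul]
        abel
      rw [hsplit]
      have hfac : |(a t)⁻¹ - 1| ≤ 2 * (c * ε₀) := by
        have heq : (a t)⁻¹ - 1 = (a t)⁻¹ * (1 - a t) := by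
          rw [mul_sub, mul_one, inv_mul_cancel₀ (hapos t ht).ne']
        rw [heq, abs_mul, abs_of_pos (inv_pos.mpr (hapos t ht)), abs_sub_comm]
        exact mul_le_mul hainv2 (hadist t ht) (abs_nonneg _) (by norm_num)
      calc ‖((a t)⁻¹ - 1) • j (σ t) + (j (σ t) - γ t)‖
          ≤ ‖((a t)⁻¹ - 1) • j (σ t)‖ + ‖j (σ t) - γ t‖ := norm_add_le _ _
        _ ≤ |(a t)⁻¹ - 1| * ‖j (σ t)‖ + ε₀ := by
            rw [norm_smul, Real.norm_eq_abs]
            have := hσapprox t ht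
            linarith
        _ ≤ 2 * (c * ε₀) * (M' + 1) + ε₀ := by
            have h1 : |(a t)⁻¹ - 1| * ‖j (σ t)‖ ≤ 2 * (c * ε₀) * (M' + 1) := by
              apply mul_le_mul hfac hσbd (norm_nonneg _) (by positivity)
            linarith
        _ = ε₀ * K := by rw [hK]; ring
        _ ≤ (ε/(2*K)) * K := mul_le_mul_of_nonneg_right hε₀ε hK0.le
        _ = ε / 2 := by field_simp
        _ < ε := by linarith
  -- assemble the sequence
  have hpos : ∀ n : ℕ, (0:ℝ) < 1/(n+1) := by
    intro n
    positivity
  choose F hF1 hF2 hF3 hF4 using fun n : ℕ => key (1/(n+1)) (hpos n)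
  refine ⟨F, hF1, hF2, hF3, ?_⟩
  intro ε hε
  obtain ⟨N, hN⟩ := exists_nat_one_div_lt hε
  refine ⟨N, fun n hn t ht => ?_⟩
  have h1 : (1:ℝ)/(n+1) ≤ 1/(N+1) := by
    apply one_div_le_one_div_of_le (by positivity)
    have : (N:ℝ) ≤ n := by exact_mod_cast hn
    linarith
  calc ‖j (F n t) - γ t‖ < 1/(n+1) := hF4 n t ht
    _ ≤ 1/(N+1) := h1
    _ < ε := hN
end

section
/- Let $\gamma : [-1,1] \to X$ be continuous into a Banach space $X$, $D \subseteq X$ a dense linear subspace, $\varepsilon > 0$, and suppose $\gamma(-1), \gamma(1) \in D$. Then the multifunction $L : [-1,1] \to 2^X$ given by $L(\pm 1) = \{\gamma(\pm 1)\}$ and $L(t) = \{u \in D : \|u - \gamma(t)\| < \varepsilon\}$ for $t \in (-1,1)$ is lower semi-continuous with nonempty convex values. -/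
open Set Topology

/-- simplified version, as stated: Let `γ : [-1,1] → X` be
continuous into a Banach space `X`, `D ⊆ X` a dense linear subspace, `ε > 0`,
with `γ(-1), γ(1) ∈ D`.  Then the multifunction `L` on `[-1,1]` given by
`L(±1) = {γ(±1)}` and `L(t) = {u ∈ D : ‖u - γ(t)‖ < ε}` for `t ∈ (-1,1)` is
lower semi-continuous with nonempty convex values. -/
theorem multifunction_lsc_nonempty_convex
    {X : Type*} [NormedAddCommGroup X] [NormedSpace ℝ X] [CompleteSpace X]
    (D : Submodule ℝ X) (hD : Dense (D : Set X))
    (γ : (Icc (-1:ℝ) 1) → X) (hγ : Continuous γ)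
    (ε : ℝ) (hε : 0 < ε)
    (hm1 : γ ⟨-1, by norm_num⟩ ∈ D) (hp1 : γ ⟨1, by norm_num⟩ ∈ D)
    (L : (Icc (-1:ℝ) 1) → Set X)
    (hL : ∀ t : (Icc (-1:ℝ) 1),
      L t = if (t : ℝ) = -1 ∨ (t : ℝ) = 1 then {γ t}
            else {u : X | u ∈ D ∧ ‖u - γ t‖ < ε}) :
    (∀ t, (L t).Nonempty ∧ Convex ℝ (L t)) ∧
    (∀ V : Set X, IsOpen V → IsOpen {t : (Icc (-1:ℝ) 1) | (L t ∩ V).Nonempty}) := by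
  have hset : ∀ t : (Icc (-1:ℝ) 1),
      {u : X | u ∈ D ∧ ‖u - γ t‖ < ε} = (D : Set X) ∩ Metric.ball (γ t) ε := by
    intro t; ext u; simp [Metric.mem_ball, dist_eq_norm]
  constructor
  · intro t
    rw [hL t]
    split_ifs with h
    · exact ⟨singleton_nonempty _, convex_singleton _⟩
    · constructor
      · obtain ⟨u, hu, huD⟩ := hD.exists_mem_open (Metric.isOpen_ball (x := γ t) (ε := ε))
          ⟨γ t, by simp [hε]⟩
        exact ⟨u, hu, by simpa [dist_eq_norm] using huD⟩
      · rw [hset t]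
        exact (D.convex).inter (convex_ball _ _)
  · intro V hV
    rw [isOpen_iff_forall_mem_open]
    rintro t₀ ⟨u, huL, huV⟩
    by_cases h0 : (t₀ : ℝ) = -1 ∨ (t₀ : ℝ) = 1
    · -- endpoint case
      have hu : u = γ t₀ := by rw [hL t₀, if_pos h0] at huL; exact huL
      subst hu
      have hD0 : γ t₀ ∈ D := by
        rcases h0 with h | h
        · have : t₀ = ⟨-1, by norm_num⟩ := Subtype.ext h
          rw [this]; exact hm1
        · have : t₀ = ⟨1, by norm_num⟩ := Subtype.ext h
          rw [this]; exact hp1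
      rcases h0 with h | h
      · refine ⟨{t | ‖γ t₀ - γ t‖ < ε ∧ (t : ℝ) < 1}, ?_, ?_, ?_⟩
        · intro t ⟨ht1, ht2⟩
          by_cases he : (t : ℝ) = -1
          · have : t = t₀ := Subtype.ext (by rw [he, h])
            subst this
            exact ⟨γ t, by rw [hL t, if_pos (Or.inl he)]; exact rfl, huV⟩
          · refine ⟨γ t₀, ?_, huV⟩
            rw [hL t, if_neg (by push_neg; exact ⟨he, ne_of_lt ht2⟩)]
            exact ⟨hD0, ht1⟩
        · exact IsOpen.inter
            (isOpen_lt ((continuous_const.sub hγ).norm) continuous_const)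
            (isOpen_lt continuous_subtype_val continuous_const)
        · exact ⟨by simpa using hε, by rw [h]; norm_num⟩
      · refine ⟨{t | ‖γ t₀ - γ t‖ < ε ∧ -1 < (t : ℝ)}, ?_, ?_, ?_⟩
        · intro t ⟨ht1, ht2⟩
          by_cases he : (t : ℝ) = 1
          · have : t = t₀ := Subtype.ext (by rw [he, h])
            subst this
            exact ⟨γ t, by rw [hL t, if_pos (Or.inr he)]; exact rfl, huV⟩
          · refine ⟨γ t₀, ?_, huV⟩
            rw [hL t, if_neg (by push_neg; exact ⟨ne_of_gt ht2, he⟩)]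
            exact ⟨hD0, ht1⟩
        · exact IsOpen.inter
            (isOpen_lt ((continuous_const.sub hγ).norm) continuous_const)
            (isOpen_lt continuous_const continuous_subtype_val)
        · exact ⟨by simpa using hε, by rw [h]; norm_num⟩
    · -- interior case
      push_neg at h0
      rw [hL t₀, if_neg (by push_neg; exact h0)] at huL
      obtain ⟨huD, huε⟩ := huL
      refine ⟨{t | ‖u - γ t‖ < ε ∧ -1 < (t : ℝ) ∧ (t : ℝ) < 1}, ?_, ?_, ?_⟩
      · intro t ⟨ht1, ht2, ht3⟩
        refine ⟨u, ?_, huV⟩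
        rw [hL t, if_neg (by push_neg; exact ⟨ne_of_gt ht2, ne_of_lt ht3⟩)]
        exact ⟨huD, ht1⟩
      · exact IsOpen.inter
          (isOpen_lt ((continuous_const.sub hγ).norm) continuous_const)
          ((isOpen_lt continuous_const continuous_subtype_val).inter
            (isOpen_lt continuous_subtype_val continuous_const))
      · refine ⟨huε, ?_, ?_⟩
        · exact lt_of_le_of_ne t₀.2.1 (Ne.symm (h0.1))
        · exact lt_of_le_of_ne t₀.2.2 (h0.2)
end

section
/- With the same setting, let $\theta \in L^\infty(\Omega)$ with $\theta(x) \leq \lambda_{n+1}$ a.e. and $\theta \not\equiv \lambda_{n+1}$. Then there exists $\hat c > 0$ such that for all $\hat u \in \hat H_n$: $\|\nabla \hat u\|_2^2 + \int_{\partial\Omega} \beta \hat u^2 \, d\sigma - \int_\Omega \theta \hat u^2 \, dx \geq \hat c \|\hat u\|^2$. -/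
/-!
Suppose no `ĉ` works. Normalizing gives `vₖ ∈ Ĥₙ`, `‖vₖ‖ = 1`, with
`a(vₖ,vₖ) - ∫ θ vₖ² → 0`. By compactness `j vₖ → w` in `L²` along a subsequence; squeezing
`λ ‖j vₖ‖₂² ≤ a(vₖ,vₖ)` shows `∫ θ w² = λ ‖w‖₂²` and `a(vₖ,vₖ) → λ ‖w‖₂²`. The bound
`‖u‖² ≤ a(u,u) + ‖u‖₂²` with the parallelogram law turns this into the Cauchy property of
`(vₖ)` in `H`, so `vₖ → u` with `‖u‖ = 1` and `a(u,u) = λ ‖u‖₂²`. Thus `u` is a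
`λ_{n+1}`-eigenfunction, nonzero almost everywhere, and `∫ (λ - θ) u² = 0` forces `θ = λ` a.e.
-/

open MeasureTheory Filter Topology

section WeightedL2

variable {Ω : Type*} [MeasurableSpace Ω] {μ : Measure Ω} {θ : Ω → ℝ}

lemma MeasureTheory.L2.norm_sq_eq_integral_sq (f : Lp ℝ 2 μ) : ‖f‖ ^ 2 = ∫ x, f x ^ 2 ∂μ := by
  rw [← real_inner_self_eq_norm_sq, L2.inner_def]
  simp_rw [RCLike.inner_apply, starRingEnd_apply, star_trivial, ← sq]

lemma integrable_mul_sq (hθ : AEStronglyMeasurable θ μ) {M : ℝ} (hM : ∀ᵐ x ∂μ, |θ x| ≤ M)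
    (f : Lp ℝ 2 μ) : Integrable (fun x => θ x * f x ^ 2) μ :=
  (Lp.memLp f).integrable_sq.bdd_mul hθ (by simpa only [Real.norm_eq_abs] using hM)

lemma integral_mul_sq_le {lam : ℝ} (hle : ∀ᵐ x ∂μ, θ x ≤ lam) {f : Lp ℝ 2 μ}
    (hθf : Integrable (fun x => θ x * f x ^ 2) μ) :
    ∫ x, θ x * f x ^ 2 ∂μ ≤ lam * ‖f‖ ^ 2 := by
  rw [L2.norm_sq_eq_integral_sq, ← integral_const_mul]
  refine integral_mono_ae hθf ((Lp.memLp f).integrable_sq.const_mul lam) ?_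
  filter_upwards [hle] with x hx
  exact mul_le_mul_of_nonneg_right hx (sq_nonneg _)

lemma integral_mul_sq_smul (θ : Ω → ℝ) (c : ℝ) (f : Lp ℝ 2 μ) :
    ∫ x, θ x * (c • f) x ^ 2 ∂μ = c ^ 2 * ∫ x, θ x * f x ^ 2 ∂μ := by
  rw [← integral_const_mul]
  refine integral_congr_ae ?_
  filter_upwards [Lp.coeFn_smul c f] with x hx
  rw [hx, Pi.smul_apply, smul_eq_mul]
  ring

lemma abs_integral_mul_sq_sub_le (hθ : AEStronglyMeasurable θ μ) {M : ℝ} (hM0 : 0 ≤ M)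
    (hM : ∀ᵐ x ∂μ, |θ x| ≤ M) (f g : Lp ℝ 2 μ) :
    |∫ x, θ x * f x ^ 2 ∂μ - ∫ x, θ x * g x ^ 2 ∂μ| ≤ M * ‖f - g‖ * (‖f‖ + ‖g‖) := by
  set F : Lp ℝ 2 μ := |f - g|
  set G : Lp ℝ 2 μ := |f + g|
  have hFG : ∫ x, F x * G x ∂μ = inner ℝ F G := by
    simp_rw [L2.inner_def, RCLike.inner_apply', starRingEnd_apply, star_trivial]
  have hFG_int : Integrable (fun x => F x * G x) μ := by
    simpa only [RCLike.inner_apply', starRingEnd_apply, star_trivial] using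
      L2.integrable_inner (𝕜 := ℝ) F G
  have hpointwise : ∀ᵐ x ∂μ, ‖θ x * f x ^ 2 - θ x * g x ^ 2‖ ≤ M * (F x * G x) := by
    filter_upwards [hM, Lp.coeFn_sub f g, Lp.coeFn_add f g, Lp.coeFn_abs (f - g),
      Lp.coeFn_abs (f + g)] with x hx hsub hadd habs_sub habs_add
    rw [habs_sub, habs_add, hsub, hadd, Pi.sub_apply, Pi.add_apply,
      Real.norm_eq_abs, show θ x * f x ^ 2 - θ x * g x ^ 2 = θ x * ((f x - g x) * (f x + g x))
        by ring, abs_mul, abs_mul]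
    exact mul_le_mul_of_nonneg_right hx (by positivity)
  calc |∫ x, θ x * f x ^ 2 ∂μ - ∫ x, θ x * g x ^ 2 ∂μ|
      = ‖∫ x, θ x * f x ^ 2 - θ x * g x ^ 2 ∂μ‖ := by
        rw [integral_sub (integrable_mul_sq hθ hM f) (integrable_mul_sq hθ hM g),
          Real.norm_eq_abs]
    _ ≤ ∫ x, M * (F x * G x) ∂μ := norm_integral_le_of_norm_le (hFG_int.const_mul M) hpointwise
    _ = M * inner ℝ F G := by rw [integral_const_mul, hFG]
    _ ≤ M * (‖f - g‖ * ‖f + g‖) := by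
        gcongr
        simpa only [F, G, norm_abs_eq_norm] using real_inner_le_norm F G
    _ ≤ M * ‖f - g‖ * (‖f‖ + ‖g‖) := by
        rw [mul_assoc]
        gcongr
        exact norm_add_le f g

lemma continuous_integral_mul_sq (hθ : AEStronglyMeasurable θ μ) {M : ℝ}
    (hM : ∀ᵐ x ∂μ, |θ x| ≤ M) : Continuous fun f : Lp ℝ 2 μ => ∫ x, θ x * f x ^ 2 ∂μ := by
  have hM' : ∀ᵐ x ∂μ, |θ x| ≤ max M 0 := hM.mono fun x hx => hx.trans (le_max_left _ _)
  refine continuous_iff_continuousAt.2 fun g => tendsto_iff_norm_sub_tendsto_zero.2 ?_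
  have hbound : Tendsto (fun f : Lp ℝ 2 μ => max M 0 * ‖f - g‖ * (‖f‖ + ‖g‖)) (𝓝 g) (𝓝 0) := by
    have : Continuous fun f : Lp ℝ 2 μ => max M 0 * ‖f - g‖ * (‖f‖ + ‖g‖) := by fun_prop
    simpa using this.tendsto g
  exact squeeze_zero (fun _ => norm_nonneg _)
    (fun f => abs_integral_mul_sq_sub_le hθ (le_max_right M 0) hM' f g) hbound

lemma ae_eq_const_of_integral_mul_sq_eq {lam : ℝ} (hle : ∀ᵐ x ∂μ, θ x ≤ lam) {f : Lp ℝ 2 μ}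
    (hθf : Integrable (fun x => θ x * f x ^ 2) μ) (hf : ∀ᵐ x ∂μ, f x ≠ 0)
    (heq : ∫ x, θ x * f x ^ 2 ∂μ = lam * ‖f‖ ^ 2) : θ =ᵐ[μ] fun _ => lam := by
  have hint : Integrable (fun x => lam * f x ^ 2 - θ x * f x ^ 2) μ :=
    ((Lp.memLp f).integrable_sq.const_mul lam).sub hθf
  have hzero : ∫ x, lam * f x ^ 2 - θ x * f x ^ 2 ∂μ = 0 := by
    rw [integral_sub ((Lp.memLp f).integrable_sq.const_mul lam) hθf, integral_const_mul,
      ← L2.norm_sq_eq_integral_sq, heq, sub_self]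
  have hnonneg : 0 ≤ᵐ[μ] fun x => lam * f x ^ 2 - θ x * f x ^ 2 := by
    filter_upwards [hle] with x hx
    show 0 ≤ lam * f x ^ 2 - θ x * f x ^ 2
    nlinarith [sq_nonneg (f x)]
  filter_upwards [(integral_eq_zero_iff_of_nonneg_ae hnonneg hint).1 hzero, hle, hf]
    with x hx hxle hfx
  have : (lam - θ x) * f x ^ 2 = 0 := by simpa only [sub_mul, Pi.zero_apply] using hx
  rcases mul_eq_zero.1 this with h | h
  · linarith
  · exact absurd (pow_eq_zero_iff two_ne_zero |>.1 h) hfx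

end WeightedL2

section Coercivity

variable {E L : Type*} [NormedAddCommGroup E] [NormedSpace ℝ E]
  [NormedAddCommGroup L] [InnerProductSpace ℝ L]
  {j : E →L[ℝ] L} {a : E →L[ℝ] E →L[ℝ] ℝ} {K : Submodule ℝ E} {lam : ℝ}

lemma exists_seq_norm_eq_one_tendsto_zero {Q : E → ℝ} (hQ : ∀ (c : ℝ) u, Q (c • u) = c ^ 2 * Q u)
    (hQK : ∀ u ∈ K, 0 ≤ Q u) (h : ∀ c > 0, ∃ u ∈ K, Q u < c * ‖u‖ ^ 2) :
    ∃ v : ℕ → E, (∀ k, v k ∈ K ∧ ‖v k‖ = 1) ∧ Tendsto (fun k => Q (v k)) atTop (𝓝 0) := by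
  have hunit : ∀ k : ℕ, ∃ v ∈ K, ‖v‖ = 1 ∧ Q v < 1 / (k + 1) := by
    intro k
    obtain ⟨u, hu, hlt⟩ := h (1 / (k + 1)) (by positivity)
    have hu0 : ‖u‖ ≠ 0 := fun h0 => by linarith [hQK u hu, h0 ▸ hlt]
    refine ⟨‖u‖⁻¹ • u, K.smul_mem _ hu, by simp [norm_smul, hu0], ?_⟩
    rw [hQ, inv_pow]
    calc (‖u‖ ^ 2)⁻¹ * Q u < (‖u‖ ^ 2)⁻¹ * (1 / (k + 1) * ‖u‖ ^ 2) := by gcongr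
      _ = 1 / (k + 1) := by field_simp
  choose v hvK hv1 hvQ using hunit
  refine ⟨v, fun k => ⟨hvK k, hv1 k⟩, ?_⟩
  exact squeeze_zero (fun k => hQK _ (hvK k)) (fun k => (hvQ k).le)
    tendsto_one_div_add_atTop_nhds_zero_nat

variable (hnorm : ∀ u, ‖u‖ ^ 2 ≤ a u u + ‖j u‖ ^ 2) (hmin : ∀ u ∈ K, lam * ‖j u‖ ^ 2 ≤ a u u)
include hnorm hmin

-- `a` satisfies the parallelogram law; the lower bound `λ ‖j (x + y)‖² ≤ a(x + y, x + y)`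
-- then controls `a(x - y, x - y)`.
lemma norm_sub_sq_le_of_mem {x y : E} (hx : x ∈ K) (hy : y ∈ K) :
    ‖x - y‖ ^ 2 ≤ 2 * (a x x + ‖j x‖ ^ 2) + 2 * (a y y + ‖j y‖ ^ 2)
      - (lam + 1) * ‖j x + j y‖ ^ 2 := by
  have hsub : a (x - y) (x - y) = a x x - a x y - a y x + a y y := by
    simp only [map_sub, sub_apply]; ring
  have hadd : a (x + y) (x + y) = a x x + a x y + a y x + a y y := by
    simp only [map_add, add_apply]; ring
  have hpar := parallelogram_law_with_norm ℝ (j x) (j y)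
  have hlow := hmin _ (K.add_mem hx hy)
  rw [map_add] at hlow
  have hdiff := hnorm (x - y)
  rw [hsub, map_sub j] at hdiff
  linarith

lemma cauchySeq_of_tendsto_form {v : ℕ → E} (hv : ∀ k, v k ∈ K) {w : L}
    (hjv : Tendsto (fun k => j (v k)) atTop (𝓝 w))
    (hav : Tendsto (fun k => a (v k) (v k)) atTop (𝓝 (lam * ‖w‖ ^ 2))) : CauchySeq v := by
  have hfst : Tendsto (Prod.fst : ℕ × ℕ → ℕ) atTop atTop := by
    rw [← prod_atTop_atTop_eq]; exact tendsto_fst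
  have hsnd : Tendsto (Prod.snd : ℕ × ℕ → ℕ) atTop atTop := by
    rw [← prod_atTop_atTop_eq]; exact tendsto_snd
  have hs := hav.add (hjv.norm.pow 2)
  have hbound : Tendsto (fun p : ℕ × ℕ => 2 * (a (v p.1) (v p.1) + ‖j (v p.1)‖ ^ 2)
      + 2 * (a (v p.2) (v p.2) + ‖j (v p.2)‖ ^ 2) - (lam + 1) * ‖j (v p.1) + j (v p.2)‖ ^ 2)
      atTop (𝓝 (2 * (lam * ‖w‖ ^ 2 + ‖w‖ ^ 2) + 2 * (lam * ‖w‖ ^ 2 + ‖w‖ ^ 2)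
        - (lam + 1) * ‖w + w‖ ^ 2)) :=
    (((hs.comp hfst).const_mul 2).add ((hs.comp hsnd).const_mul 2)).sub
      ((((hjv.comp hfst).add (hjv.comp hsnd)).norm.pow 2).const_mul _)
  have hlim : 2 * (lam * ‖w‖ ^ 2 + ‖w‖ ^ 2) + 2 * (lam * ‖w‖ ^ 2 + ‖w‖ ^ 2)
      - (lam + 1) * ‖w + w‖ ^ 2 = 0 := by
    rw [← two_smul ℝ w, norm_smul, Real.norm_two]; ring
  rw [hlim] at hbound
  have hdist_sq : Tendsto (fun p : ℕ × ℕ => dist (v p.1) (v p.2) ^ 2) atTop (𝓝 0) :=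
    squeeze_zero (fun _ => sq_nonneg _)
      (fun p => dist_eq_norm (v p.1) (v p.2) ▸ norm_sub_sq_le_of_mem hnorm hmin (hv _) (hv _))
      hbound
  rw [cauchySeq_iff_tendsto_dist_atTop_0]
  simpa [Real.sqrt_sq dist_nonneg] using hdist_sq.sqrt

theorem exists_pos_mul_norm_sq_le_sub_of_compact [CompleteSpace E] (hK : IsClosed (K : Set E))
    (hj : ∀ u : ℕ → E, (∃ M, ∀ k, ‖u k‖ ≤ M) →
      ∃ φ : ℕ → ℕ, StrictMono φ ∧ ∃ w, Tendsto (fun k => j (u (φ k))) atTop (𝓝 w))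
    {T : L → ℝ} (hTc : Continuous T) (hTle : ∀ f, T f ≤ lam * ‖f‖ ^ 2)
    (hTsmul : ∀ (c : ℝ) f, T (c • f) = c ^ 2 * T f)
    (hrigid : ∀ u ∈ K, a u u = lam * ‖j u‖ ^ 2 → T (j u) = lam * ‖j u‖ ^ 2 → u = 0) :
    ∃ c > 0, ∀ u ∈ K, c * ‖u‖ ^ 2 ≤ a u u - T (j u) := by
  by_contra! hcon
  obtain ⟨v, hv, hQv⟩ := exists_seq_norm_eq_one_tendsto_zero
    (Q := fun u => a u u - T (j u))
    (fun c u => by simp only [map_smul, smul_apply, smul_eq_mul, hTsmul]; ring)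
    (fun u hu => by linarith [hmin u hu, hTle (j u)]) hcon
  obtain ⟨φ, hφ, w, hw⟩ := hj v ⟨1, fun k => (hv k).2.le⟩
  have haT : Tendsto (fun k => a (v (φ k)) (v (φ k))) atTop (𝓝 (T w)) := by
    simpa using (hQv.comp hφ.tendsto_atTop).add ((hTc.tendsto w).comp hw)
  have hTw : T w = lam * ‖w‖ ^ 2 := le_antisymm (hTle w) <|
    le_of_tendsto_of_tendsto' ((hw.norm.pow 2).const_mul lam) haT fun k => hmin _ (hv _).1
  rw [hTw] at haT
  obtain ⟨u, hu⟩ := cauchySeq_tendsto_of_complete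
    (cauchySeq_of_tendsto_form hnorm hmin (fun k => (hv (φ k)).1) hw haT)
  have hju : j u = w := tendsto_nhds_unique ((j.continuous.tendsto u).comp hu) hw
  have hau : a u u = lam * ‖w‖ ^ 2 := tendsto_nhds_unique
    (((a.continuous₂.comp (continuous_id.prodMk continuous_id)).tendsto u).comp hu) haT
  have huK : u ∈ K := hK.mem_of_tendsto hu (Eventually.of_forall fun k => (hv _).1)
  have hu1 : ‖u‖ = 1 := tendsto_nhds_unique hu.norm (by simp [(hv _).2])
  subst hju
  simp [hrigid u huK hau hTw] at hu1

end Coercivity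

theorem lemma_B_lower_general
    {Ω : Type*} [MeasurableSpace Ω] (μ : Measure Ω)
    {H : Type*} [NormedAddCommGroup H] [InnerProductSpace ℝ H] [CompleteSpace H]
    (j : H →L[ℝ] Lp ℝ 2 μ)
    -- compactness of the embedding H¹(Ω) ↪ L²(Ω) :
    (hj_compact : ∀ u : ℕ → H, (∃ M, ∀ k, ‖u k‖ ≤ M) →
      ∃ φ : ℕ → ℕ, StrictMono φ ∧ ∃ w, Tendsto (fun k => j (u (φ k))) atTop (nhds w))
    (a : H →L[ℝ] H →L[ℝ] ℝ)
    -- H-norm control by the form (β ≥ 0) : ‖u‖² ≤ a(u,u) + ‖u‖₂² :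
    (hnorm : ∀ u : H, ‖u‖ ^ 2 ≤ a u u + ‖j u‖ ^ 2)
    (lam : ℝ)  -- λ_{n+1}
    (Hhat : Submodule ℝ H) (hHhat_closed : IsClosed (Hhat : Set H))
    (En1 : Submodule ℝ H)
    -- variational characterization of λ_{n+1} on Ĥₙ :
    (hmin : ∀ u ∈ Hhat, lam * ‖j u‖ ^ 2 ≤ a u u)
    -- the equality case consists exactly of the eigenfunctions of λ_{n+1} :
    (heq : ∀ u ∈ Hhat, a u u = lam * ‖j u‖ ^ 2 → u ∈ En1)
    -- unique continuation property on E(λ_{n+1}) :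
    (hUC : ∀ u ∈ En1, u ≠ 0 → μ {x | (j u : Ω → ℝ) x = 0} = 0)
    -- θ ∈ L^∞(Ω), θ ≤ λ_{n+1} a.e., θ ≢ λ_{n+1} :
    (θ : Ω → ℝ) (hθmeas : Measurable θ)
    (hθbd : ∃ M, ∀ᵐ x ∂μ, |θ x| ≤ M)
    (hθle : ∀ᵐ x ∂μ, θ x ≤ lam)
    (hθne : ¬ (θ =ᵐ[μ] fun _ => lam)) :
    ∃ chat > (0:ℝ), ∀ u ∈ Hhat,
      chat * ‖u‖ ^ 2 ≤ a u u - ∫ x, θ x * ((j u : Ω → ℝ) x) ^ 2 ∂μ := by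
  obtain ⟨M, hM⟩ := hθbd
  have hθ := hθmeas.aestronglyMeasurable (μ := μ)
  refine exists_pos_mul_norm_sq_le_sub_of_compact hnorm hmin hHhat_closed hj_compact
    (continuous_integral_mul_sq hθ hM)
    (fun f => integral_mul_sq_le hθle (integrable_mul_sq hθ hM f)) (integral_mul_sq_smul θ)
    fun u hu hau hTu => ?_
  by_contra hu0
  refine hθne (ae_eq_const_of_integral_mul_sq_eq hθle (integrable_mul_sq hθ hM _) ?_ hTu)
  simpa [ae_iff] using hUC u (heq u hu hau) hu0

/-- same Robin setting as Statement 6 (`H` models `H¹(Ω)`,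
`j : H → L²(Ω)` the compact inclusion, `a` the Robin form).  `Ĥₙ` is the
orthogonal complement of the span of the first `n` Robin eigenspaces; the
variational characterization `λ_{n+1} ‖û‖₂² ≤ a(û,û)` holds on `Ĥₙ`, with
equality precisely on the eigenspace `E(λ_{n+1}) ⊆ Ĥₙ`, whose nonzero
elements satisfy unique continuation.  If `θ ∈ L^∞(Ω)`, `θ ≤ λ_{n+1}` a.e.
and `θ ≢ λ_{n+1}`, then there is `ĉ > 0` with
`a(û,û) - ∫_Ω θ û² dx ≥ ĉ ‖û‖²` for all `û ∈ Ĥₙ`. -/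
theorem lemma_B_lower
    {Ω : Type*} [MeasurableSpace Ω] (μ : Measure Ω)
    {H : Type*} [NormedAddCommGroup H] [InnerProductSpace ℝ H] [CompleteSpace H]
    (j : H →L[ℝ] Lp ℝ 2 μ)
    -- compactness of the embedding H¹(Ω) ↪ L²(Ω) :
    (hj_compact : ∀ u : ℕ → H, (∃ M, ∀ k, ‖u k‖ ≤ M) →
      ∃ φ : ℕ → ℕ, StrictMono φ ∧ ∃ w, Tendsto (fun k => j (u (φ k))) atTop (nhds w))
    (a : H →L[ℝ] H →L[ℝ] ℝ)
    -- H-norm control by the form (β ≥ 0) : ‖u‖² ≤ a(u,u) + ‖u‖₂² :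
    (hnorm : ∀ u : H, ‖u‖ ^ 2 ≤ a u u + ‖j u‖ ^ 2)
    (n : ℕ) (lam : ℝ)  -- λ_{n+1}
    (Hhat : Submodule ℝ H) (hHhat_closed : IsClosed (Hhat : Set H))
    (En1 : Submodule ℝ H) (hEsub : En1 ≤ Hhat)
    -- variational characterization of λ_{n+1} on Ĥₙ :
    (hmin : ∀ u ∈ Hhat, lam * ‖j u‖ ^ 2 ≤ a u u)
    -- the equality case consists exactly of the eigenfunctions of λ_{n+1} :
    (heq : ∀ u ∈ Hhat, a u u = lam * ‖j u‖ ^ 2 → u ∈ En1)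
    -- unique continuation property on E(λ_{n+1}) :
    (hUC : ∀ u ∈ En1, u ≠ 0 → μ {x | (j u : Ω → ℝ) x = 0} = 0)
    -- θ ∈ L^∞(Ω), θ ≤ λ_{n+1} a.e., θ ≢ λ_{n+1} :
    (θ : Ω → ℝ) (hθmeas : Measurable θ)
    (hθbd : ∃ M, ∀ᵐ x ∂μ, |θ x| ≤ M)
    (hθle : ∀ᵐ x ∂μ, θ x ≤ lam)
    (hθne : ¬ (θ =ᵐ[μ] fun _ => lam)) :
    ∃ chat > (0:ℝ), ∀ u ∈ Hhat,
      chat * ‖u‖ ^ 2 ≤ a u u - ∫ x, θ x * ((j u : Ω → ℝ) x) ^ 2 ∂μ :=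
  lemma_B_lower_general μ j hj_compact a hnorm lam Hhat hHhat_closed En1 hmin heq hUC θ hθmeas hθbd
    hθle hθne
end
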